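/- arXiv:2204.11283 — 4 statements merged into one kernel-verified Lean document; each statement's English description precedes it below -/
import Mathlib

section
/- Let G be a connected graph on n vertices with radius r ≥ 1. Then C̄_C(G) ≤ (n-1)/(n-1 + r(r-1)/2). -/
open Finset

private lemma dist_getVert_le {V : Type*} {G : SimpleGraph V} (hG : G.Connected)
    {u v : V} (p : G.Walk u v) (k : ℕ) : G.dist u (p.getVert k) ≤ k := by
  induction p generalizing k with
  | nil => simp [SimpleGraph.Walk.getVert, SimpleGraph.dist_self]
  | @cons a b c h q ih =>
    cases k with
    | zero => simp [SimpleGraph.Walk.getVert]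
    | succ k =>
      calc G.dist a ((SimpleGraph.Walk.cons h q).getVert (k+1))
          ≤ G.dist a b + G.dist b ((SimpleGraph.Walk.cons h q).getVert (k+1)) :=
            hG.dist_triangle
        _ ≤ 1 + k := by
            have h1 : G.dist a b = 1 := SimpleGraph.dist_eq_one_iff_adj.mpr h
            rw [h1]
            exact Nat.add_le_add_left (ih k) 1
        _ = k + 1 := Nat.add_comm 1 k

private lemma dist_getVert_ge {V : Type*} {G : SimpleGraph V}
    {u v : V} (p : G.Walk u v) (k : ℕ) : G.dist (p.getVert k) v ≤ p.length - k := by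
  induction p generalizing k with
  | nil => simp [SimpleGraph.Walk.getVert]
  | cons h q ih =>
    cases k with
    | zero =>
      simpa [SimpleGraph.Walk.getVert] using
        SimpleGraph.dist_le (SimpleGraph.Walk.cons h q)
    | succ k =>
      simpa [SimpleGraph.Walk.getVert] using ih k

private lemma exists_dist_eq' {V : Type*} {G : SimpleGraph V} (hG : G.Connected)
    (u v : V) (k : ℕ) (hk : k ≤ G.dist u v) : ∃ w, G.dist u w = k := by
  obtain ⟨p, hp⟩ := hG.exists_walk_length_eq_dist u v
  refine ⟨p.getVert k, le_antisymm (dist_getVert_le hG p k) ?_⟩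
  have h1 : G.dist (p.getVert k) v ≤ G.dist u v - k := by
    simpa [hp] using dist_getVert_ge p k
  have h2 : G.dist u v ≤ G.dist u (p.getVert k) + G.dist (p.getVert k) v :=
    hG.dist_triangle
  omega

/-- Radius bound: `C̄_C(G) ≤ (n-1)/(n-1 + r(r-1)/2)`. -/
theorem closenessCentrality_le_of_radius
    {V : Type*} [Fintype V] [Nonempty V] (G : SimpleGraph V) (hG : G.Connected)
    (hn : 2 ≤ Fintype.card V) (r : ℕ)
    (hr : r = Finset.univ.inf' Finset.univ_nonempty
      (fun v => Finset.univ.sup (fun u => G.dist v u)))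
    (hr1 : 1 ≤ r) :
    (1 / (Fintype.card V : ℝ)) *
        ∑ v : V, ((Fintype.card V : ℝ) - 1) / ∑ w : V, (G.dist v w : ℝ) ≤
      ((Fintype.card V : ℝ) - 1) /
        ((Fintype.card V : ℝ) - 1 + (r : ℝ) * ((r : ℝ) - 1) / 2) := by
  classical
  set n := Fintype.card V with hncard
  set D : ℝ := (n : ℝ) - 1 + (r : ℝ) * ((r : ℝ) - 1) / 2 with hD
  have hn1 : (1 : ℝ) ≤ (n : ℝ) - 1 := by
    have : (2 : ℝ) ≤ (n : ℝ) := by exact_mod_cast hn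
    linarith
  have hDpos : 0 < D := by
    have hrR : (1 : ℝ) ≤ (r : ℝ) := by exact_mod_cast hr1
    have : 0 ≤ (r : ℝ) * ((r : ℝ) - 1) / 2 := by
      apply div_nonneg _ (by norm_num)
      exact mul_nonneg (by positivity) (by linarith)
    simp only [hD]; linarith
  -- key per-vertex bound
  have key : ∀ v : V, D ≤ ∑ w : V, (G.dist v w : ℝ) := by
    intro v
    -- eccentricity
    set e := Finset.univ.sup (fun u => G.dist v u) with he
    have hre : r ≤ e := by
      rw [hr]
      exact Finset.inf'_le _ (Finset.mem_univ v)
    -- choose a function f with dist v (f k) = k for k ≤ e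
    obtain ⟨u, -, hu⟩ := Finset.exists_mem_eq_sup Finset.univ Finset.univ_nonempty
      (fun u => G.dist v u)
    have hdvu : G.dist v u = e := hu.symm
    have hf : ∀ k ∈ Finset.Icc 1 e, ∃ w, G.dist v w = k := by
      intro k hk
      exact exists_dist_eq' hG v u k (by rw [hdvu]; exact (Finset.mem_Icc.mp hk).2)
    choose f hfd using hf
    set S : Finset V := (Finset.Icc 1 e).attach.image (fun k => f k.1 k.2) with hS
    have hinj : ∀ a ∈ (Finset.Icc 1 e).attach, ∀ b ∈ (Finset.Icc 1 e).attach,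
        f a.1 a.2 = f b.1 b.2 → a = b := by
      intro a _ b _ hab
      have : G.dist v (f a.1 a.2) = G.dist v (f b.1 b.2) := by rw [hab]
      rw [hfd a.1 a.2, hfd b.1 b.2] at this
      exact Subtype.ext this
    have hcardS : S.card = e := by
      rw [hS, Finset.card_image_of_injOn hinj, Finset.card_attach, Nat.card_Icc]
      omega
    have hSsub : S ⊆ Finset.univ.erase v := by
      intro w hw
      rw [hS, Finset.mem_image] at hw
      obtain ⟨k, hk, hkw⟩ := hw
      have hd : G.dist v w = k.1 := by rw [← hkw]; exact hfd k.1 k.2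
      have hk1 : 1 ≤ k.1 := (Finset.mem_Icc.mp k.2).1
      refine Finset.mem_erase.mpr ⟨?_, Finset.mem_univ w⟩
      intro hwv
      rw [hwv, SimpleGraph.dist_self] at hd
      omega
    have hecard : e ≤ n - 1 := by
      have := Finset.card_le_card hSsub
      rw [hcardS, Finset.card_erase_of_mem (Finset.mem_univ v), Finset.card_univ] at this
      exact this
    -- sum over S
    have hsumS : ∑ w ∈ S, G.dist v w = ∑ k ∈ Finset.Icc 1 e, k := by
      rw [hS, Finset.sum_image hinj]
      rw [← Finset.sum_attach (Finset.Icc 1 e) (fun k => k)]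
      exact Finset.sum_congr rfl (fun k _ => hfd k.1 k.2)
    -- natural number bound
    have hnat : 2 * (n - 1) + e * (e - 1) ≤ 2 * ∑ w : V, G.dist v w := by
      have hd0 : G.dist v v = 0 := SimpleGraph.dist_self
      have hsplit : ∑ w : V, G.dist v w = ∑ w ∈ Finset.univ.erase v, G.dist v w :=
        (Finset.sum_erase Finset.univ (f := fun w => G.dist v w) hd0).symm
      have hsplit2 : ∑ w ∈ Finset.univ.erase v, G.dist v w =
          ∑ w ∈ S, G.dist v w + ∑ w ∈ Finset.univ.erase v \ S, G.dist v w := by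
        rw [← Finset.sum_sdiff hSsub]; ring
      have hrest : (Finset.univ.erase v \ S).card ≤
          ∑ w ∈ Finset.univ.erase v \ S, G.dist v w := by
        calc (Finset.univ.erase v \ S).card
            = ∑ _w ∈ Finset.univ.erase v \ S, 1 := by simp
          _ ≤ ∑ w ∈ Finset.univ.erase v \ S, G.dist v w := by
              apply Finset.sum_le_sum
              intro w hw
              have hw' := Finset.mem_erase.mp (Finset.mem_sdiff.mp hw).1
              have := hG.pos_dist_of_ne (Ne.symm hw'.1)
              omega
      have hcardrest : (Finset.univ.erase v \ S).card = n - 1 - e := by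
        rw [Finset.card_sdiff_of_subset hSsub, hcardS,
          Finset.card_erase_of_mem (Finset.mem_univ v), Finset.card_univ]
      have he1 : 1 ≤ e := le_trans hr1 hre
      have hgauss : (∑ k ∈ Finset.Icc 1 e, k) * 2 = e * (e + 1) := by
        have hins : insert 0 (Finset.Icc 1 e) = Finset.range (e + 1) := by
          ext x
          simp [Finset.mem_Icc, Nat.lt_succ_iff]
          omega
        have h0 : ∑ k ∈ Finset.Icc 1 e, k = ∑ k ∈ Finset.range (e + 1), k := by
          rw [← hins, Finset.sum_insert (by simp)]
          omega
        rw [h0, Finset.sum_range_id_mul_two]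
        rw [Nat.add_sub_cancel]
        ring
      have hprod : e * (e + 1) = e * (e - 1) + 2 * e := by
        have h2 : e + 1 = (e - 1) + 2 := by omega
        rw [h2]
        ring
      set A := ∑ w ∈ S, G.dist v w
      set B := ∑ w ∈ Finset.univ.erase v \ S, G.dist v w
      set P1 := e * (e + 1)
      set P2 := e * (e - 1)
      omega
    -- real bound
    have hcast : (2 : ℝ) * ((n : ℝ) - 1) + (e : ℝ) * ((e : ℝ) - 1) ≤
        2 * ∑ w : V, (G.dist v w : ℝ) := by
      have h1 : ((2 * (n - 1) + e * (e - 1) : ℕ) : ℝ) ≤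
          ((2 * ∑ w : V, G.dist v w : ℕ) : ℝ) := by exact_mod_cast hnat
      have he1 : 1 ≤ e := le_trans hr1 hre
      push_cast [Nat.cast_sub (by omega : 1 ≤ n), Nat.cast_sub he1] at h1
      convert h1 using 2 <;> push_cast <;> ring
    have hrr : (r : ℝ) * ((r : ℝ) - 1) ≤ (e : ℝ) * ((e : ℝ) - 1) := by
      have h1 : (r : ℝ) ≤ (e : ℝ) := by exact_mod_cast hre
      have h2 : (1 : ℝ) ≤ (r : ℝ) := by exact_mod_cast hr1
      apply mul_le_mul h1 (by linarith) (by linarith) (by positivity)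
    simp only [hD]
    linarith
  -- conclude
  have hterm : ∀ v : V, ((n : ℝ) - 1) / ∑ w : V, (G.dist v w : ℝ) ≤ ((n : ℝ) - 1) / D := by
    intro v
    exact div_le_div_of_nonneg_left (by linarith) hDpos (key v)
  have hsum : ∑ v : V, ((n : ℝ) - 1) / ∑ w : V, (G.dist v w : ℝ) ≤
      (n : ℝ) * (((n : ℝ) - 1) / D) := by
    calc ∑ v : V, ((n : ℝ) - 1) / ∑ w : V, (G.dist v w : ℝ)
        ≤ ∑ _v : V, ((n : ℝ) - 1) / D := Finset.sum_le_sum (fun v _ => hterm v)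
      _ = (n : ℝ) * (((n : ℝ) - 1) / D) := by
          rw [Finset.sum_const, Finset.card_univ, nsmul_eq_mul]
  have hnpos : (0 : ℝ) < (n : ℝ) := by linarith
  calc (1 / (n : ℝ)) * ∑ v : V, ((n : ℝ) - 1) / ∑ w : V, (G.dist v w : ℝ)
      ≤ (1 / (n : ℝ)) * ((n : ℝ) * (((n : ℝ) - 1) / D)) := by
        apply mul_le_mul_of_nonneg_left hsum (by positivity)
    _ = ((n : ℝ) - 1) / D := by field_simp
end

section
/- Let G be a connected graph on n vertices with radius r ≥ 3 and maximum vertex degree Δ. Then C̄_C(G) ≤ (n-1)/(2n-1-Δ + r(r-3)/2). -/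
/-!
For every vertex `v`, the transmission `∑ w, d(v, w)` is at least `2n - 1 - Δ + r(r - 3)/2`:
every vertex other than `v` is at distance at least `2` except the at most `Δ` neighbours of `v`,
and since `ε(v) ≥ r`, a shortest path from `v` to an eccentric vertex passes through vertices at
every distance `3, …, r`, which adds `1 + 2 + ⋯ + (r - 2) = (r - 1)(r - 2)/2` on top of that.
Each term `(n - 1)/∑ w, d(v, w)` of the average is therefore at most
`(n - 1)/(2n - 1 - Δ + r(r - 3)/2)`.
-/

open Finset

theorem one_div_card_mul_sum_div_le_div {ι : Type*} [Fintype ι] [Nonempty ι] {c D : ℝ}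
    {f : ι → ℝ} (hc : 0 ≤ c) (hD : 0 < D) (hf : ∀ i, D ≤ f i) :
    1 / (Fintype.card ι : ℝ) * ∑ i, c / f i ≤ c / D := by
  have hcard : (0 : ℝ) < Fintype.card ι := by exact_mod_cast Fintype.card_pos
  calc 1 / (Fintype.card ι : ℝ) * ∑ i, c / f i
      ≤ 1 / (Fintype.card ι : ℝ) * ∑ _i : ι, c / D := by
        gcongr with i
        exact hf i
    _ = c / D := by
        rw [sum_const, card_univ, nsmul_eq_mul]
        field_simp

theorem sum_range_sub_two_mul_two {r : ℕ} (hr : 1 ≤ r) :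
    ((∑ k ∈ range (r + 1), (k - 2) : ℕ) : ℝ) * 2 = (r - 1) * (r - 2) := by
  induction r, hr using Nat.le_induction with
  | base => norm_num [sum_range_succ]
  | succ r hr ih =>
    rw [sum_range_succ, Nat.cast_add, add_mul, ih, Nat.cast_sub (by omega)]
    push_cast
    ring

namespace SimpleGraph

variable {V : Type*} {G : SimpleGraph V}

theorem Reachable.exists_dist_eq_of_le {u v : V} (h : G.Reachable u v) {k : ℕ}
    (hk : k ≤ G.dist u v) : ∃ w, G.dist u w = k := by
  obtain ⟨p, hp⟩ := h.exists_walk_length_eq_dist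
  refine ⟨p.getVert k, ?_⟩
  rw [← length_eq_dist_of_subwalk hp (p.isSubwalk_take k), Walk.take_length]
  omega

variable [Fintype V]

noncomputable def transmission (G : SimpleGraph V) (v : V) : ℕ := ∑ w, G.dist v w

/-- Each vertex `w ≠ v` contributes `2`, a neighbour of `v` one less, and every vertex its
(truncated) excess `d(v, w) - 2` over that. -/
theorem Connected.transmission_add_degree (hG : G.Connected) [DecidableRel G.Adj] (v : V) :
    G.transmission v + G.degree v = 2 * (Fintype.card V - 1) + ∑ w, (G.dist v w - 2) := by
  classical
  have hpoint : ∀ w, G.dist v w + (if G.Adj v w then 1 else 0) =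
      2 * (if w ≠ v then 1 else 0) + (G.dist v w - 2) := by
    intro w
    rcases Nat.lt_or_ge (G.dist v w) 2 with h | h
    · interval_cases hd : G.dist v w
      · simp [(hG.dist_eq_zero_iff).mp hd]
      · have hadj := dist_eq_one_iff_adj.mp hd
        simp [hadj, hadj.ne.symm]
    · have hne : w ≠ v := by rintro rfl; simp at h
      have hnadj : ¬ G.Adj v w := fun hadj => by rw [dist_eq_one_iff_adj.mpr hadj] at h; omega
      simp only [hnadj, hne, ↓reduceIte, ne_eq, not_false_eq_true, add_zero, mul_one]
      omega
  have hdeg : ∑ w, (if G.Adj v w then 1 else 0) = G.degree v := by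
    rw [← card_neighborFinset_eq_degree, neighborFinset_eq_filter, card_filter]
  have hcard : ∑ w, (if w ≠ v then 1 else 0) = Fintype.card V - 1 := by
    rw [← card_filter, filter_ne', card_erase_of_mem (mem_univ v), card_univ]
  rw [transmission, ← hdeg, ← hcard, mul_sum, ← sum_add_distrib, ← sum_add_distrib]
  exact sum_congr rfl fun w _ => hpoint w

theorem Reachable.sum_range_le_sum_dist {M : Type*} [AddCommMonoid M] [PartialOrder M]
    [IsOrderedAddMonoid M] {u v : V} (h : G.Reachable v u) {e : ℕ} (he : e ≤ G.dist v u)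
    {f : ℕ → M} (hf : ∀ k, 0 ≤ f k) :
    ∑ k ∈ range (e + 1), f k ≤ ∑ w, f (G.dist v w) := by
  have hsub : range (e + 1) ⊆ univ.image (G.dist v) := fun k hk => by
    obtain ⟨w, hw⟩ :=
      h.exists_dist_eq_of_le (le_trans (Nat.lt_succ_iff.mp (mem_range.mp hk)) he)
    exact mem_image.mpr ⟨w, mem_univ w, hw⟩
  calc ∑ k ∈ range (e + 1), f k ≤ ∑ k ∈ univ.image (G.dist v), f k :=
        sum_le_sum_of_subset_of_nonneg hsub fun k _ _ => hf k
    _ ≤ ∑ w, f (G.dist v w) := sum_image_le_of_nonneg fun k _ => hf k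

theorem Connected.le_transmission_of_le_dist (hG : G.Connected) [DecidableRel G.Adj]
    {v u : V} {r : ℕ} (hr : 1 ≤ r) (hru : r ≤ G.dist v u) :
    2 * ((Fintype.card V : ℝ) - 1) - G.degree v + ((r : ℝ) - 1) * ((r : ℝ) - 2) / 2 ≤
      G.transmission v := by
  have hcard : 1 ≤ Fintype.card V := Fintype.card_pos_iff.mpr ⟨v⟩
  have hsplit : (G.transmission v : ℝ) + G.degree v =
      2 * ((Fintype.card V : ℝ) - 1) + ((∑ w, (G.dist v w - 2) : ℕ) : ℝ) := by
    have h := congrArg (Nat.cast : ℕ → ℝ) (hG.transmission_add_degree v)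
    push_cast [Nat.cast_sub hcard] at h
    exact_mod_cast h
  have hfar : ∑ k ∈ range (r + 1), (k - 2) ≤ ∑ w, (G.dist v w - 2) :=
    (hG v u).sum_range_le_sum_dist hru fun _ => Nat.zero_le _
  have hgauss := sum_range_sub_two_mul_two hr
  have hfarℝ : ((∑ k ∈ range (r + 1), (k - 2) : ℕ) : ℝ) ≤
      ((∑ w, (G.dist v w - 2) : ℕ) : ℝ) := by
    exact_mod_cast hfar
  linarith

end SimpleGraph

theorem closenessCentrality_le_of_radius_maxDegree_general
    {V : Type*} [Fintype V] [Nonempty V]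
    (G : SimpleGraph V) [DecidableRel G.Adj] (hG : G.Connected)
    (r : ℕ)
    (hr : r = Finset.univ.inf' Finset.univ_nonempty
      (fun v => Finset.univ.sup (fun u => G.dist v u)))
    (hr3 : 3 ≤ r)
    (Δ : ℕ) (hΔ : Δ = Finset.univ.sup (fun v => G.degree v)) :
    (1 / (Fintype.card V : ℝ)) *
        ∑ v : V, ((Fintype.card V : ℝ) - 1) / ∑ w : V, (G.dist v w : ℝ) ≤
      ((Fintype.card V : ℝ) - 1) /
        (2 * (Fintype.card V : ℝ) - 1 - (Δ : ℝ) + (r : ℝ) * ((r : ℝ) - 3) / 2) := by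
  have hn : (1 : ℝ) ≤ Fintype.card V := by exact_mod_cast Fintype.card_pos
  have hΔn : (Δ : ℝ) + 1 ≤ Fintype.card V := by
    have : Δ < Fintype.card V := hΔ ▸ (Finset.sup_lt_iff Fintype.card_pos).mpr
      fun v _ => G.degree_lt_card_verts v
    exact_mod_cast this
  have hr3ℝ : (3 : ℝ) ≤ r := by exact_mod_cast hr3
  refine one_div_card_mul_sum_div_le_div (by linarith) (by nlinarith) fun v => ?_
  obtain ⟨u, -, hu⟩ := exists_mem_eq_sup univ univ_nonempty (G.dist v)
  have hru : r ≤ G.dist v u := hu ▸ hr ▸ inf'_le _ (mem_univ v)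
  have hdeg : G.degree v ≤ Δ := hΔ ▸ le_sup (f := fun w => G.degree w) (mem_univ v)
  have hdegℝ : (G.degree v : ℝ) ≤ Δ := by exact_mod_cast hdeg
  have htrans := hG.le_transmission_of_le_dist (by omega) hru
  rw [SimpleGraph.transmission, Nat.cast_sum] at htrans
  linarith

/-- Radius/degree bound: `C̄_C(G) ≤ (n-1)/(2n-1-Δ + r(r-3)/2)` when `r ≥ 3`. -/
theorem closenessCentrality_le_of_radius_maxDegree
    {V : Type*} [Fintype V] [Nonempty V] [DecidableEq V]
    (G : SimpleGraph V) [DecidableRel G.Adj] (hG : G.Connected)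
    (r : ℕ)
    (hr : r = Finset.univ.inf' Finset.univ_nonempty
      (fun v => Finset.univ.sup (fun u => G.dist v u)))
    (hr3 : 3 ≤ r)
    (Δ : ℕ) (hΔ : Δ = Finset.univ.sup (fun v => G.degree v)) :
    (1 / (Fintype.card V : ℝ)) *
        ∑ v : V, ((Fintype.card V : ℝ) - 1) / ∑ w : V, (G.dist v w : ℝ) ≤
      ((Fintype.card V : ℝ) - 1) /
        (2 * (Fintype.card V : ℝ) - 1 - (Δ : ℝ) + (r : ℝ) * ((r : ℝ) - 3) / 2) :=
  closenessCentrality_le_of_radius_maxDegree_general G hG r hr hr3 Δ hΔ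
end

section
/- For the path graph P_n, the closeness centrality satisfies (4/n)·√((n-1)/(n+1))·arctan(√((n-1)/(n+1))) ≤ C̄_C(P_n) ≤ (π/n)·√((n-1)/(n+1)) + (n-1)/(n·⌊n/2⌋·⌈n/2⌉). -/
/-!
Write `n = N + 1`. The sum of the distances from the `k`-th vertex of the path is
`(k - N/2)² + r²` with `r² = ((N + 1)² - 1)/4`, so the summand of the closeness centrality is
`N/r` times the Lorentzian `r / ((x - N/2)² + r²)` evaluated at `x = k`. This function is
unimodal with its peak at `N/2`, and for such functions the sum over `0, …, N` and the integral
over `[0, N]` differ by at most one peak value; the integral is `2 arctan (N/(2r))`, where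
`N/(2r) = √((n-1)/(n+1))`. For the lower bound the peak value `1/r` is dominated by the two end
values, since `N/2 ≤ r`. For the upper bound the largest value at an integer is the one at the
central vertex `⌊n/2⌋`, whose distance sum is `⌊n/2⌋⌈n/2⌉`, and `arctan ≤ π/4` on `[0, 1]`.
-/

open Finset SimpleGraph Real MeasureTheory intervalIntegral

section Unimodal

variable {f : ℝ → ℝ} {c : ℝ}

theorem apply_le_apply_of_unimodal (hmono : MonotoneOn f (Set.Iic c))
    (hanti : AntitoneOn f (Set.Ici c)) (x : ℝ) : f x ≤ f c := by
  rcases le_total x c with h | h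
  · exact hmono h (le_refl c) h
  · exact hanti (le_refl c) h h

theorem min_le_apply_of_unimodal (hmono : MonotoneOn f (Set.Iic c))
    (hanti : AntitoneOn f (Set.Ici c)) {u v x : ℝ} (hux : u ≤ x) (hxv : x ≤ v) :
    min (f u) (f v) ≤ f x := by
  rcases le_total x c with h | h
  · exact (min_le_left _ _).trans (hmono (hux.trans h) h hux)
  · exact (min_le_right _ _).trans (hanti h (h.trans hxv) hxv)

theorem intervalIntegrable_of_unimodal (hmono : MonotoneOn f (Set.Iic c))
    (hanti : AntitoneOn f (Set.Ici c)) (u v : ℝ) :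
    IntervalIntegrable f volume u v := by
  set a := min (min u v) c
  set b := max (max u v) c
  have hac : a ≤ c := min_le_right _ _
  have hcb : c ≤ b := le_max_right _ _
  have hac' : IntervalIntegrable f volume a c :=
    (hmono.mono (by rw [Set.uIcc_of_le hac]; exact Set.Icc_subset_Iic_self)).intervalIntegrable
  have hcb' : IntervalIntegrable f volume c b :=
    (hanti.mono (by rw [Set.uIcc_of_le hcb]; exact Set.Icc_subset_Ici_self)).intervalIntegrable
  refine (hac'.trans hcb').mono_set (Set.uIcc_subset_uIcc ?_ ?_) <;>
    exact Set.mem_uIcc_of_le (by simp [a]) (by simp [b])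

theorem exists_nat_le_le_add_one {N : ℕ} (h0 : 0 ≤ c) (hcN : c ≤ N) (hN : 1 ≤ N) :
    ∃ M : ℕ, (M : ℝ) ≤ c ∧ c ≤ ↑(M + 1) ∧ M + 1 ≤ N := by
  obtain ⟨K, rfl⟩ : ∃ K, N = K + 1 := ⟨N - 1, by omega⟩
  rcases hcN.lt_or_eq with h | rfl
  · exact ⟨⌊c⌋₊, Nat.floor_le h0, by push_cast; exact (Nat.lt_floor_add_one c).le,
      (Nat.floor_lt h0).mpr h⟩
  · exact ⟨K, by push_cast; linarith, le_rfl, le_rfl⟩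

theorem integral_le_sum_Ico_add_of_unimodal (hmono : MonotoneOn f (Set.Iic c))
    (hanti : AntitoneOn f (Set.Ici c)) {N : ℕ} (h0 : 0 ≤ c) (hcN : c ≤ N) (hN : 1 ≤ N) :
    ∫ x in (0 : ℝ)..N, f x ≤ ∑ k ∈ Ico 1 N, f k + f c := by
  obtain ⟨M, hMc, hcM, hMN⟩ := exists_nat_le_le_add_one h0 hcN hN
  have hf := intervalIntegrable_of_unimodal hmono hanti
  have hleft : ∫ x in (0 : ℝ)..M, f x ≤ ∑ k ∈ Ico 1 (M + 1), f k :=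
    calc ∫ x in (0 : ℝ)..M, f x ≤ ∑ i ∈ Ico 0 M, f ↑(i + 1) := by
          simpa using (hmono.mono fun x hx => hx.2.trans hMc).integral_le_sum_Ico (Nat.zero_le M)
      _ = _ := Finset.sum_Ico_add' (fun k : ℕ => f k) 0 M 1
  have hmid : ∫ x in (M : ℝ)..↑(M + 1), f x ≤ f c :=
    calc ∫ x in (M : ℝ)..↑(M + 1), f x ≤ ∫ _ in (M : ℝ)..↑(M + 1), f c :=
          integral_mono_on (hMc.trans hcM) (hf _ _) intervalIntegrable_const
            fun x _ => apply_le_apply_of_unimodal hmono hanti x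
      _ = f c := by simp
  have hright : ∫ x in (↑(M + 1) : ℝ)..N, f x ≤ ∑ k ∈ Ico (M + 1) N, f k :=
    (hanti.mono fun x hx => hcM.trans hx.1).integral_le_sum_Ico hMN
  rw [← Finset.sum_Ico_consecutive _ (by omega : 1 ≤ M + 1) hMN,
    ← integral_add_adjacent_intervals (hf 0 ↑(M + 1)) (hf ↑(M + 1) N),
    ← integral_add_adjacent_intervals (hf 0 M) (hf M ↑(M + 1))]
  linarith

theorem sum_range_le_integral_add_of_unimodal (hmono : MonotoneOn f (Set.Iic c))
    (hanti : AntitoneOn f (Set.Ici c)) {N : ℕ} {B : ℝ} (h0 : 0 ≤ c) (hcN : c ≤ N)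
    (hN : 1 ≤ N) (hB : ∀ k ≤ N, f k ≤ B) :
    ∑ k ∈ range (N + 1), f k ≤ (∫ x in (0 : ℝ)..N, f x) + B := by
  obtain ⟨M, hMc, hcM, hMN⟩ := exists_nat_le_le_add_one h0 hcN hN
  have hf := intervalIntegrable_of_unimodal hmono hanti
  have hleft : ∑ k ∈ range M, f k ≤ ∫ x in (0 : ℝ)..M, f x := by
    simpa using (hmono.mono fun x hx => hx.2.trans hMc).sum_le_integral_Ico (Nat.zero_le M)
  have hmid : f M + f ↑(M + 1) ≤ (∫ x in (M : ℝ)..↑(M + 1), f x) + B := by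
    have hmin : min (f M) (f ↑(M + 1)) ≤ ∫ x in (M : ℝ)..↑(M + 1), f x :=
      calc min (f M) (f ↑(M + 1))
          = ∫ _ in (M : ℝ)..↑(M + 1), min (f M) (f ↑(M + 1)) := by simp
        _ ≤ _ := integral_mono_on (hMc.trans hcM) intervalIntegrable_const (hf _ _)
            fun x hx => min_le_apply_of_unimodal hmono hanti hx.1 hx.2
    have hmax : max (f M) (f ↑(M + 1)) ≤ B := max_le (hB M (by omega)) (hB _ hMN)
    rw [← min_add_max]
    exact add_le_add hmin hmax
  have hright : ∑ k ∈ Ico (M + 2) (N + 1), f k ≤ ∫ x in (↑(M + 1) : ℝ)..N, f x :=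
    calc ∑ k ∈ Ico (M + 2) (N + 1), f k = ∑ i ∈ Ico (M + 1) N, f ↑(i + 1) :=
          (Finset.sum_Ico_add' (fun k : ℕ => f k) (M + 1) N 1).symm
      _ ≤ _ := (hanti.mono fun x hx => hcM.trans hx.1).sum_le_integral_Ico hMN
  rw [← Finset.sum_range_add_sum_Ico _ (by omega : M + 2 ≤ N + 1), Finset.sum_range_succ,
    Finset.sum_range_succ, ← integral_add_adjacent_intervals (hf 0 ↑(M + 1)) (hf ↑(M + 1) N),
    ← integral_add_adjacent_intervals (hf 0 M) (hf M ↑(M + 1))]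
  linarith

end Unimodal

noncomputable def lorentzian (c r x : ℝ) : ℝ := r / ((x - c) ^ 2 + r ^ 2)

section Lorentzian

variable {c r : ℝ}

theorem lorentzian_le_lorentzian (hr : 0 < r) {x y : ℝ} (h : (y - c) ^ 2 ≤ (x - c) ^ 2) :
    lorentzian c r x ≤ lorentzian c r y :=
  div_le_div_of_nonneg_left hr.le (by positivity) (by linarith)

theorem lorentzian_monotoneOn (hr : 0 < r) : MonotoneOn (lorentzian c r) (Set.Iic c) :=
  fun x hx y hy hxy => lorentzian_le_lorentzian hr <| by
    nlinarith [Set.mem_Iic.mp hx, Set.mem_Iic.mp hy]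

theorem lorentzian_antitoneOn (hr : 0 < r) : AntitoneOn (lorentzian c r) (Set.Ici c) :=
  fun x hx y hy hxy => lorentzian_le_lorentzian hr <| by
    nlinarith [Set.mem_Ici.mp hx, Set.mem_Ici.mp hy]

theorem hasDerivAt_arctan_div_sub (hr : r ≠ 0) (x : ℝ) :
    HasDerivAt (fun x => arctan ((x - c) / r)) (lorentzian c r x) x := by
  refine (((hasDerivAt_id' x).sub_const c).div_const r).arctan.congr_deriv ?_
  unfold lorentzian
  field_simp
  ring

theorem integral_lorentzian (hr : r ≠ 0) (a b : ℝ) :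
    ∫ x in a..b, lorentzian c r x = arctan ((b - c) / r) - arctan ((a - c) / r) :=
  integral_eq_sub_of_hasDerivAt (fun x _ => hasDerivAt_arctan_div_sub hr x)
    (Continuous.intervalIntegrable
      (continuous_const.div (by fun_prop) fun x => by positivity) a b)

theorem integral_lorentzian_half (hr : r ≠ 0) (a : ℝ) :
    ∫ x in (0 : ℝ)..a, lorentzian (a / 2) r x = 2 * arctan (a / (2 * r)) := by
  rw [integral_lorentzian hr, show (a - a / 2) / r = a / (2 * r) by ring,
    show (0 - a / 2) / r = -(a / (2 * r)) by ring, arctan_neg]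
  ring

theorem two_mul_arctan_le_sum_range_lorentzian {N : ℕ} (hN : 1 ≤ N) (hr : 0 < r)
    (hNr : N / (2 * r) ≤ 1) :
    2 * arctan (N / (2 * r)) ≤ ∑ k ∈ range (N + 1), lorentzian (N / 2) r k := by
  have hint := integral_le_sum_Ico_add_of_unimodal (lorentzian_monotoneOn (c := N / 2) hr)
    (lorentzian_antitoneOn hr) (by positivity) (by linarith [N.cast_nonneg (α := ℝ)]) hN
  have hpeak : lorentzian (N / 2) r (N / 2) ≤
      lorentzian (N / 2) r (0 : ℕ) + lorentzian (N / 2) r N := by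
    simp only [lorentzian, Nat.cast_zero, sub_self, zero_sub, neg_sq,
      show (N : ℝ) - N / 2 = N / 2 by ring]
    have hN2r : (N : ℝ) ≤ 2 * r := (div_le_one (by positivity)).mp hNr
    have hsq : ((N : ℝ) / 2) ^ 2 ≤ r ^ 2 := by nlinarith [N.cast_nonneg (α := ℝ)]
    rw [← add_div, div_le_div_iff₀ (by positivity) (by positivity)]
    nlinarith [mul_le_mul_of_nonneg_left hsq hr.le]
  rw [Finset.sum_range_succ, Finset.range_eq_Ico, Finset.sum_eq_sum_Ico_succ_bot (by omega),
    zero_add, ← integral_lorentzian_half hr.ne']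
  linarith

theorem sum_range_lorentzian_le {N : ℕ} {B : ℝ} (hN : 1 ≤ N) (hr : 0 < r)
    (hB : ∀ k ≤ N, lorentzian (N / 2) r k ≤ B) :
    ∑ k ∈ range (N + 1), lorentzian (N / 2) r k ≤ 2 * arctan (N / (2 * r)) + B := by
  rw [← integral_lorentzian_half hr.ne']
  exact sum_range_le_integral_add_of_unimodal (lorentzian_monotoneOn hr)
    (lorentzian_antitoneOn hr) (by positivity) (by linarith [N.cast_nonneg (α := ℝ)]) hN hB

end Lorentzian

section PathGraph

variable {n : ℕ}

theorem pathGraph_dist_le_of_val_eq_add (i : Fin n) :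
    ∀ (d : ℕ) (j : Fin n), (j : ℕ) = i + d → (pathGraph n).dist i j ≤ d
  | 0, j, h => by
    obtain rfl : j = i := Fin.ext (by omega)
    simp
  | d + 1, j, h => by
    let j' : Fin n := ⟨i + d, by omega⟩
    have hadj : (pathGraph n).Adj j' j := pathGraph_adj.mpr (Or.inl (by simp [j']; omega))
    calc (pathGraph n).dist i j ≤ (pathGraph n).dist i j' + (pathGraph n).dist j' j :=
          (pathGraph_preconnected n i j').dist_triangle_left j
      _ ≤ d + 1 := add_le_add (pathGraph_dist_le_of_val_eq_add i d j' rfl)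
          (dist_eq_one_iff_adj.mpr hadj).le

theorem pathGraph_natDist_le_length {i j : Fin n} (p : (pathGraph n).Walk i j) :
    Nat.dist i j ≤ p.length := by
  induction p with
  | nil => simp
  | cons h p ih =>
    rw [pathGraph_adj] at h
    simp only [Walk.length_cons, Nat.dist] at ih ⊢
    omega

theorem pathGraph_dist (i j : Fin n) : (pathGraph n).dist i j = Nat.dist i j := by
  refine le_antisymm ?_ ?_
  · rcases le_total (i : ℕ) j with h | h
    · exact pathGraph_dist_le_of_val_eq_add i _ j (by simp only [Nat.dist]; omega)
    · rw [dist_comm]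
      exact pathGraph_dist_le_of_val_eq_add j _ i (by simp only [Nat.dist]; omega)
  · obtain ⟨p, hp⟩ := (pathGraph_preconnected n i j).exists_walk_length_eq_dist
    exact hp ▸ pathGraph_natDist_le_length p

theorem sum_range_natCast (m : ℕ) : ∑ i ∈ range m, (i : ℝ) = m * (m - 1) / 2 := by
  induction m with
  | zero => simp
  | succ m ih => rw [sum_range_succ, ih]; push_cast; ring

theorem sum_range_add_natDist (k m : ℕ) :
    ∑ j ∈ range (k + m), (Nat.dist k j : ℝ) = k * (k + 1) / 2 + m * (m - 1) / 2 := by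
  have hleft : ∑ j ∈ range k, (Nat.dist k j : ℝ) = ∑ j ∈ range k, ((j : ℝ) + 1) := by
    rw [← sum_range_reflect]
    refine sum_congr rfl fun j hj => ?_
    rw [mem_range] at hj
    rw [show Nat.dist k (k - 1 - j) = j + 1 by simp only [Nat.dist]; omega]
    push_cast; rfl
  have hright : ∀ i, Nat.dist k (k + i) = i := fun i => by simp only [Nat.dist]; omega
  rw [sum_range_add, hleft, sum_add_distrib, sum_range_natCast]
  simp only [hright, sum_range_natCast, sum_const, card_range, nsmul_eq_mul]
  ring

theorem sum_pathGraph_dist (v : Fin n) :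
    ∑ w, ((pathGraph n).dist v w : ℝ)
      = (v - ((n : ℝ) - 1) / 2) ^ 2 + ((n : ℝ) ^ 2 - 1) / 4 := by
  obtain ⟨m, hm⟩ : ∃ m, n = v + m := ⟨n - v, by omega⟩
  have hsum := sum_range_add_natDist v m
  rw [← hm] at hsum
  simp_rw [pathGraph_dist]
  have hmn : (n : ℝ) = v + m := by exact_mod_cast hm
  rw [Fin.sum_univ_eq_sum_range (fun j => (Nat.dist v j : ℝ)), hsum, hmn]
  ring

theorem sq_natHalf_sub_le (k : ℕ) :
    (((n / 2 : ℕ) : ℝ) - ((n : ℝ) - 1) / 2) ^ 2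
      ≤ ((k : ℝ) - ((n : ℝ) - 1) / 2) ^ 2 := by
  rcases Nat.even_or_odd' n with ⟨t, rfl | rfl⟩
  · have hk : (1 : ℤ) ≤ (2 * k - 2 * t + 1) ^ 2 :=
      one_le_sq_iff_one_le_abs _ |>.mpr (Int.one_le_abs (by omega))
    rw [show 2 * t / 2 = t by omega]
    push_cast
    nlinarith [(by exact_mod_cast hk : (1 : ℝ) ≤ (2 * k - 2 * t + 1) ^ 2)]
  · rw [show (2 * t + 1) / 2 = t by omega]
    push_cast
    nlinarith [sq_nonneg ((k : ℝ) - t)]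

theorem sum_pathGraph_dist_central (h : n / 2 < n) :
    ∑ w, ((pathGraph n).dist ⟨n / 2, h⟩ w : ℝ) = (n / 2 : ℕ) * ((n + 1) / 2 : ℕ) := by
  rw [sum_pathGraph_dist, Fin.val_mk]
  rcases Nat.even_or_odd' n with ⟨t, rfl | rfl⟩
  · rw [show 2 * t / 2 = t by omega, show (2 * t + 1) / 2 = t by omega]
    push_cast; ring
  · rw [show (2 * t + 1) / 2 = t by omega, show (2 * t + 1 + 1) / 2 = t + 1 by omega]
    push_cast; ring

theorem div_sum_pathGraph_dist_eq {N : ℕ} {r : ℝ} (hr : r ^ 2 = (((N : ℝ) + 1) ^ 2 - 1) / 4)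
    (hr0 : r ≠ 0) (v : Fin (N + 1)) :
    (N : ℝ) / ∑ w, ((pathGraph (N + 1)).dist v w : ℝ) = N / r * lorentzian (N / 2) r v := by
  rw [sum_pathGraph_dist, lorentzian, hr]
  push_cast
  field_simp
  ring

theorem sum_div_sum_pathGraph_dist_eq {N : ℕ} {r : ℝ}
    (hr : r ^ 2 = (((N : ℝ) + 1) ^ 2 - 1) / 4) (hr0 : r ≠ 0) :
    ∑ v : Fin (N + 1), (N : ℝ) / ∑ w, ((pathGraph (N + 1)).dist v w : ℝ)
      = N / r * ∑ k ∈ range (N + 1), lorentzian (N / 2) r k := by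
  simp_rw [div_sum_pathGraph_dist_eq hr hr0]
  rw [← mul_sum, Fin.sum_univ_eq_sum_range (fun k => lorentzian (N / 2) r k)]

theorem div_mul_lorentzian_central_eq {N : ℕ} {r : ℝ}
    (hr : r ^ 2 = (((N : ℝ) + 1) ^ 2 - 1) / 4) (hr0 : r ≠ 0) :
    N / r * lorentzian (N / 2) r ((N + 1) / 2 : ℕ)
      = N / (((N + 1) / 2 : ℕ) * ((N + 1 + 1) / 2 : ℕ)) := by
  rw [← sum_pathGraph_dist_central (Nat.div_lt_self (Nat.succ_pos N) one_lt_two),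
    div_sum_pathGraph_dist_eq hr hr0]

end PathGraph

/-- Asymptotically tight bounds on the closeness centrality of the path `P_n`. -/
theorem closenessCentrality_pathGraph_bounds (n : ℕ) (hn : 2 ≤ n) :
    (4 / (n : ℝ)) * Real.sqrt (((n : ℝ) - 1) / ((n : ℝ) + 1)) *
        Real.arctan (Real.sqrt (((n : ℝ) - 1) / ((n : ℝ) + 1))) ≤
      (1 / (n : ℝ)) *
        ∑ v : Fin n,
          ((n : ℝ) - 1) / ∑ w : Fin n, ((SimpleGraph.pathGraph n).dist v w : ℝ) ∧
    (1 / (n : ℝ)) *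
        ∑ v : Fin n,
          ((n : ℝ) - 1) / ∑ w : Fin n, ((SimpleGraph.pathGraph n).dist v w : ℝ) ≤
      (Real.pi / (n : ℝ)) * Real.sqrt (((n : ℝ) - 1) / ((n : ℝ) + 1)) +
        ((n : ℝ) - 1) / ((n : ℝ) * ((n / 2 : ℕ) : ℝ) * (((n + 1) / 2 : ℕ) : ℝ)) := by
  obtain ⟨N, rfl⟩ : ∃ N, n = N + 1 := ⟨n - 1, by omega⟩
  have hN : 1 ≤ N := by omega
  simp only [Nat.cast_add, Nat.cast_one, add_sub_cancel_right]
  set s := √((N : ℝ) / (N + 1 + 1))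
  have hs0 : 0 < s := by positivity
  have hs1 : s ≤ 1 := sqrt_le_one.mpr ((div_le_one (by positivity)).mpr (by linarith))
  -- the half-width `√(N (N + 2)) / 2` of the Lorentzian, written so that `N / (2 r) = s`
  set r := N / (2 * s) with hr
  have hr0 : 0 < r := by positivity
  have hsr : N / (2 * r) = s := by rw [hr]; field_simp
  have hr2 : r ^ 2 = (((N : ℝ) + 1) ^ 2 - 1) / 4 := by
    rw [hr, div_pow, mul_pow, sq_sqrt (by positivity)]; field_simp; ring
  have hlower := hsr ▸ two_mul_arctan_le_sum_range_lorentzian hN hr0 (hsr ▸ hs1)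
  have hupper := hsr ▸ sum_range_lorentzian_le hN hr0 fun k _ =>
    lorentzian_le_lorentzian hr0 <| by simpa using sq_natHalf_sub_le (n := N + 1) k
  have harctan : arctan s ≤ π / 4 := arctan_one ▸ arctan_strictMono.monotone hs1
  have h2s : (N : ℝ) / r = 2 * s := by rw [← hsr]; field_simp
  have hcentre := h2s ▸ div_mul_lorentzian_central_eq hr2 hr0.ne'
  rw [sum_div_sum_pathGraph_dist_eq hr2 hr0.ne', h2s]
  constructor
  · calc 4 / (N + 1) * s * arctan s = 2 * s / (N + 1) * (2 * arctan s) := by ring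
      _ ≤ 2 * s / (N + 1) * ∑ k ∈ range (N + 1), lorentzian (N / 2) r k := by gcongr
      _ = _ := by ring
  · have key : 2 * s * ∑ k ∈ range (N + 1), lorentzian (N / 2) r k
        ≤ s * π + N / (((N + 1) / 2 : ℕ) * ((N + 1 + 1) / 2 : ℕ)) := by
      nlinarith [mul_le_mul_of_nonneg_left hupper (by positivity : (0 : ℝ) ≤ 2 * s),
        mul_le_mul_of_nonneg_left harctan hs0.le]
    rw [mul_assoc _ (((N + 1) / 2 : ℕ) : ℝ), ← div_div]
    calc _ ≤ 1 / (N + 1) * (s * π + N / (((N + 1) / 2 : ℕ) * ((N + 1 + 1) / 2 : ℕ))) := by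
          gcongr
      _ = _ := by ring
end

section
/- The closeness centrality of the path graph satisfies lim_{n→∞} n·C̄_C(P_n) = π. -/
/-!
Vertex `k` of `P_n` has total distance `∑_w |k - w| = (k - (n-1)/2)² + (n² - 1)/4`, so
`n · C̄_C(P_n)` is the left Riemann sum over `[0, n]` of the Lorentzian
`(n - 1) / ((x - (n-1)/2)² + (n² - 1)/4)`. Its integral is `π √((n-1)/(n+1)) → π` by the
arctangent, and the Riemann sum is within `O(1/n)` of it because the Lorentzian varies by
`O(1/n²)` on each unit interval.
-/

open Finset Filter Real

namespace SimpleGraph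

lemma pathGraph.natDist_le_length {n : ℕ} {u v : Fin n} (p : (pathGraph n).Walk u v) :
    Nat.dist u v ≤ p.length := by
  induction p with
  | nil => simp
  | @cons a b c hab p ih =>
    have : Nat.dist a b = 1 := by
      rcases pathGraph_adj.mp hab with h | h <;> simp only [Nat.dist] <;> omega
    have := Nat.dist.triangle_inequality a b c
    rw [Walk.length_cons]
    omega

lemma pathGraph.exists_walk_length_eq_sub {n : ℕ} (u v : Fin n) (huv : u ≤ v) :
    ∃ p : (pathGraph n).Walk u v, p.length = v - u := by
  obtain ⟨d, hd⟩ : ∃ d, (v : ℕ) = u + d := ⟨v - u, by omega⟩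
  induction d generalizing u with
  | zero =>
    obtain rfl : u = v := Fin.ext (by omega)
    exact ⟨.nil, by simp⟩
  | succ d ih =>
    obtain ⟨p, hp⟩ := ih ⟨u + 1, by omega⟩ (Fin.mk_le_of_le_val (by omega)) (by dsimp only; omega)
    exact ⟨.cons (pathGraph_adj.mpr (.inl rfl)) p, by rw [Walk.length_cons, hp]; dsimp only; omega⟩

lemma pathGraph_dist {n : ℕ} (u v : Fin n) : (pathGraph n).dist u v = Nat.dist u v := by
  wlog huv : u ≤ v generalizing u v
  · rw [dist_comm, Nat.dist_comm, this v u (le_of_not_ge huv)]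
  obtain ⟨p, hp⟩ := pathGraph.exists_walk_length_eq_sub u v huv
  obtain ⟨q, hq⟩ := (pathGraph_preconnected n u v).exists_walk_length_eq_dist
  have := dist_le p
  have := pathGraph.natDist_le_length q
  rw [Nat.dist_eq_sub_of_le huv] at *
  omega

end SimpleGraph

lemma sum_range_natDist {n k : ℕ} (hk : k ≤ n) :
    ∑ w ∈ range n, (Nat.dist k w : ℝ)
      = ((k : ℝ) - ((n : ℝ) - 1) / 2) ^ 2 + ((n : ℝ) ^ 2 - 1) / 4 := by
  induction n generalizing k with
  | zero => simp [Nat.le_zero.mp hk]; norm_num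
  | succ n ih =>
    cases k with
    | zero =>
      rw [sum_range_succ, ih (Nat.zero_le n), Nat.dist_zero_left]
      push_cast; ring
    | succ k =>
      simp only [sum_range_succ', Nat.dist_succ_succ, Nat.dist_zero_right]
      rw [ih (by omega)]
      push_cast; ring

lemma integral_inv_sub_sq_add (c : ℝ) {s : ℝ} (hs : 0 < s) (a b : ℝ) :
    ∫ x in a..b, ((x - c) ^ 2 + s)⁻¹ = (arctan ((b - c) / √s) - arctan ((a - c) / √s)) / √s := by
  have hderiv (x : ℝ) : HasDerivAt (fun x => arctan ((x - c) / √s) / √s) ((x - c) ^ 2 + s)⁻¹ x := by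
    have := (((hasDerivAt_id x).sub_const c).div_const √s).arctan.div_const √s
    refine this.congr_deriv ?_
    simp only [id]
    field_simp
    rw [sq_sqrt hs.le]
    ring
  rw [intervalIntegral.integral_eq_sub_of_hasDerivAt (fun x _ => hderiv x)
    (by apply Continuous.intervalIntegrable; fun_prop (disch := intro; positivity))]
  ring

lemma abs_inv_sub_sq_add_sub_le (c : ℝ) {s : ℝ} (hs : 0 < s) (x y : ℝ) :
    |((x - c) ^ 2 + s)⁻¹ - ((y - c) ^ 2 + s)⁻¹| ≤ |x - y| * |x + y - 2 * c| / s ^ 2 := by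
  have hx : s ≤ (x - c) ^ 2 + s := by nlinarith [sq_nonneg (x - c)]
  have hy : s ≤ (y - c) ^ 2 + s := by nlinarith [sq_nonneg (y - c)]
  have hxy : ((x - c) ^ 2 + s)⁻¹ - ((y - c) ^ 2 + s)⁻¹
      = (y - x) * (x + y - 2 * c) / (((x - c) ^ 2 + s) * ((y - c) ^ 2 + s)) := by
    field_simp; ring
  have hpos : 0 < ((x - c) ^ 2 + s) * ((y - c) ^ 2 + s) := by positivity
  rw [hxy, abs_div, abs_mul, abs_sub_comm y, abs_of_pos hpos]
  gcongr
  nlinarith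

lemma abs_sum_range_sub_integral_le {f : ℝ → ℝ} (hf : Continuous f) {n : ℕ} {C : ℝ}
    (hC : ∀ k < n, ∀ x ∈ Set.Icc (k : ℝ) (k + 1), |f x - f k| ≤ C) :
    |∑ k ∈ range n, f k - ∫ x in (0 : ℝ)..n, f x| ≤ n * C := by
  rw [← Nat.cast_zero, ← intervalIntegral.sum_integral_adjacent_intervals
    (fun k _ => hf.intervalIntegrable _ _), ← sum_sub_distrib]
  calc |∑ k ∈ range n, (f k - ∫ x in (k : ℝ)..(k + 1 : ℕ), f x)|
      ≤ ∑ k ∈ range n, |f k - ∫ x in (k : ℝ)..(k + 1 : ℕ), f x| := abs_sum_le_sum_abs _ _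
    _ ≤ ∑ _k ∈ range n, C := sum_le_sum fun k hk => ?_
    _ = n * C := by simp
  have hk : k < n := mem_range.mp hk
  have := intervalIntegral.norm_integral_le_of_norm_le_const (a := k) (b := k + 1)
    (f := fun x => f x - f k) (C := C) fun x hx => by
      rw [Set.uIoc_of_le (by linarith)] at hx
      exact hC k hk x (Set.Ioc_subset_Icc_self hx)
  rw [intervalIntegral.integral_sub (hf.intervalIntegrable _ _) intervalIntegrable_const] at this
  simpa [abs_sub_comm] using this

-- The paper's `4(n-1) / ((2x - n + 1)² + n² - 1)`, i.e. `(n - 1) / ∑_w |x - w|` at vertices.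
noncomputable def pathCloseness (n : ℕ) (x : ℝ) : ℝ :=
  ((n : ℝ) - 1) * ((x - ((n : ℝ) - 1) / 2) ^ 2 + ((n : ℝ) ^ 2 - 1) / 4)⁻¹

section pathCloseness

variable {n : ℕ}

lemma continuous_pathCloseness (hn : 2 ≤ n) : Continuous (pathCloseness n) := by
  have : (0 : ℝ) < ((n : ℝ) ^ 2 - 1) / 4 := by
    have : (2 : ℝ) ≤ n := by exact_mod_cast hn
    nlinarith
  unfold pathCloseness
  fun_prop (disch := intro; positivity)

lemma integral_pathCloseness (hn : 2 ≤ n) :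
    ∫ x in (0 : ℝ)..n, pathCloseness n x = π * √(((n : ℝ) - 1) / (n + 1)) := by
  have hn' : (2 : ℝ) ≤ n := by exact_mod_cast hn
  set s : ℝ := ((n : ℝ) ^ 2 - 1) / 4
  have hs : 0 < s := by simp only [s]; nlinarith
  have hr : 0 < √s := sqrt_pos.mpr hs
  have hrs : √s ^ 2 = s := sq_sqrt hs.le
  have hb : ((n : ℝ) - (n - 1) / 2) / √s = (n + 1) / 2 / √s := by ring
  -- the two arctangent arguments are reciprocal, so their arctangents add up to `π / 2`
  have ha : ((0 : ℝ) - (n - 1) / 2) / √s = -((n + 1) / 2 / √s)⁻¹ := by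
    field_simp
    rw [hrs]
    ring
  have hratio : ((n : ℝ) - 1) / (n + 1) = ((n - 1) / 2 / √s) ^ 2 := by
    rw [div_pow, hrs]; field_simp; ring
  have hpos : (0 : ℝ) ≤ (n - 1) / 2 / √s := div_nonneg (by linarith) hr.le
  simp only [pathCloseness]
  rw [intervalIntegral.integral_const_mul, integral_inv_sub_sq_add _ hs, ha, hb, arctan_neg,
    arctan_inv_of_pos (by positivity), hratio, sqrt_sq hpos]
  field_simp
  ring

lemma abs_pathCloseness_sub_le (hn : 2 ≤ n) {k : ℕ} (hk : k < n) {x : ℝ}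
    (hx : x ∈ Set.Icc (k : ℝ) (k + 1)) :
    |pathCloseness n x - pathCloseness n k| ≤ ((n : ℝ) - 1) * n / (((n : ℝ) ^ 2 - 1) / 4) ^ 2 := by
  have hn' : (2 : ℝ) ≤ n := by exact_mod_cast hn
  have hk' : (k : ℝ) + 1 ≤ n := by exact_mod_cast hk
  have hs : (0 : ℝ) < ((n : ℝ) ^ 2 - 1) / 4 := by nlinarith
  obtain ⟨hkx, hxk1⟩ := hx
  have hxk : |x - k| ≤ 1 := abs_le.mpr ⟨by linarith, by linarith⟩
  have hmid : |x + k - 2 * (((n : ℝ) - 1) / 2)| ≤ n := abs_le.mpr ⟨by linarith, by linarith⟩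
  simp only [pathCloseness]
  rw [← mul_sub, abs_mul, abs_of_nonneg (by linarith : (0 : ℝ) ≤ n - 1), mul_div_assoc]
  refine mul_le_mul_of_nonneg_left ?_ (by linarith)
  calc _ ≤ |x - k| * |x + k - 2 * (((n : ℝ) - 1) / 2)| / (((n : ℝ) ^ 2 - 1) / 4) ^ 2 :=
        abs_inv_sub_sq_add_sub_le _ hs x k
    _ ≤ 1 * n / (((n : ℝ) ^ 2 - 1) / 4) ^ 2 := by gcongr
    _ = _ := by rw [one_mul]

lemma tendsto_integral_pathCloseness :
    Tendsto (fun n : ℕ => ∫ x in (0 : ℝ)..n, pathCloseness n x) atTop (nhds π) := by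
  have hratio : Tendsto (fun n : ℕ => ((n : ℝ) - 1) / (n + 1)) atTop (nhds 1) := by
    have := (tendsto_const_nhds (x := (1 : ℝ))).sub
      ((tendsto_one_div_add_atTop_nhds_zero_nat (𝕜 := ℝ)).const_mul 2)
    rw [mul_zero, sub_zero] at this
    refine this.congr fun n => ?_
    field_simp
    ring
  have := ((continuous_sqrt.tendsto 1).comp hratio).const_mul π
  rw [sqrt_one, mul_one] at this
  refine this.congr' ?_
  filter_upwards [eventually_ge_atTop 2] with n hn
  exact (integral_pathCloseness hn).symm

lemma tendsto_sum_range_pathCloseness :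
    Tendsto (fun n : ℕ => ∑ k ∈ range n, pathCloseness n k) atTop (nhds π) := by
  have herr : Tendsto (fun n : ℕ => ∑ k ∈ range n, pathCloseness n k
      - ∫ x in (0 : ℝ)..n, pathCloseness n x) atTop (nhds 0) := by
    refine squeeze_zero_norm' ?_ (tendsto_const_div_atTop_nhds_zero_nat 32)
    filter_upwards [eventually_ge_atTop 2] with n hn
    have hn' : (2 : ℝ) ≤ n := by exact_mod_cast hn
    refine (abs_sum_range_sub_integral_le (continuous_pathCloseness hn)
      fun k hk x hx => abs_pathCloseness_sub_le hn hk hx).trans ?_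
    have hs : (0 : ℝ) < ((n : ℝ) ^ 2 - 1) / 4 := by nlinarith
    -- the bound is `16 n² / ((n - 1)(n + 1)²) ≤ 32 / n`
    rw [← mul_div_assoc, div_le_div_iff₀ (by positivity) (by positivity)]
    nlinarith
  simpa using tendsto_integral_pathCloseness.add herr

end pathCloseness

lemma sum_div_sum_dist_pathGraph (n : ℕ) :
    ∑ v : Fin n, ((n : ℝ) - 1) / ∑ w : Fin n, ((SimpleGraph.pathGraph n).dist v w : ℝ)
      = ∑ k ∈ range n, pathCloseness n k := by
  rw [← Fin.sum_univ_eq_sum_range]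
  refine sum_congr rfl fun v _ => ?_
  simp only [SimpleGraph.pathGraph_dist]
  rw [Fin.sum_univ_eq_sum_range (fun w => (Nat.dist v w : ℝ)), sum_range_natDist v.is_lt.le,
    pathCloseness, div_eq_mul_inv]

/-- `lim_{n→∞} n · C̄_C(P_n) = π`. -/
theorem tendsto_mul_closenessCentrality_pathGraph :
    Tendsto
      (fun n : ℕ =>
        (n : ℝ) *
          ((1 / (n : ℝ)) *
            ∑ v : Fin n,
              ((n : ℝ) - 1) /
                ∑ w : Fin n, ((SimpleGraph.pathGraph n).dist v w : ℝ)))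
      atTop (nhds Real.pi) := by
  refine tendsto_sum_range_pathCloseness.congr' ?_
  filter_upwards [eventually_ne_atTop 0] with n hn
  rw [sum_div_sum_dist_pathGraph, ← mul_assoc, mul_one_div_cancel (by exact_mod_cast hn), one_mul]
end
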